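/- arXiv:1110.4429 — 2 statements merged into one kernel-verified Lean document; each statement's English description precedes it below -/
import Mathlib

section
/- Let N > 6 be an integer and ζ = exp(2πi/N). Let r, s, c, d be integers with 0 < r ≤ N/2, 0 < s ≤ N/2, r ≠ s, and gcd(c,d) = 1. Put r* = μ(rc)·r·d and s* = μ(sc)·s·d. If {rc} = {sc}, then ζ^{r* − s*} ≠ 1. -/
open Complex

/-- ζ = exp(2πi/N), a primitive N-th root of unity. -/
noncomputable def zeta (N : ℤ) : ℂ := Complex.exp (2 * Real.pi * Complex.I / N)

/-- q = exp(2πiτ/N). -/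
noncomputable def qq (N : ℤ) (τ : ℂ) : ℂ := Complex.exp (2 * Real.pi * Complex.I * τ / N)

/-- {x}: the unique integer with 0 ≤ {x} ≤ N/2 and x ≡ ±{x} (mod N). -/
def br (N x : ℤ) : ℤ := min (x % N) (N - x % N)

/-- μ(x) ∈ {1,-1}: μ(x) = 1 if x ≡ 0 or N/2 (mod N); otherwise x ≡ μ(x){x} (mod N). -/
def mu (N x : ℤ) : ℤ := if 2 * (x % N) ≤ N then 1 else -1

/-- Weierstrass ℘-function relative to the lattice L_τ = ℤ + ℤτ. -/
noncomputable def wp (τ z : ℂ) : ℂ :=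
  1 / z ^ 2 + ∑' p : {p : ℤ × ℤ // p ≠ 0},
    (1 / (z - ((p.1.1 : ℂ) + (p.1.2 : ℂ) * τ)) ^ 2 - 1 / ((p.1.1 : ℂ) + (p.1.2 : ℂ) * τ) ^ 2)

/-- φ_s(τ) = (2πi)⁻² ℘(s/N; L_τ) − 1/12. -/
noncomputable def phi (N s : ℤ) (τ : ℂ) : ℂ :=
  (1 / (2 * Real.pi * Complex.I) ^ 2) * wp τ ((s : ℂ) / (N : ℂ)) - 1 / 12

/-- Λ_k(τ) = (℘(k/N;L_τ) − ℘(1/N;L_τ))/(℘(2/N;L_τ) − ℘(1/N;L_τ)). -/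
noncomputable def Lam (N k : ℤ) (τ : ℂ) : ℂ :=
  (wp τ ((k : ℂ) / (N : ℂ)) - wp τ (1 / (N : ℂ))) /
    (wp τ ((2 : ℂ) / (N : ℂ)) - wp τ (1 / (N : ℂ)))

/-- u_s = ζ^{s*} q^{{sc}} where s* = μ(sc)sd, for the lower row (c,d) of A. -/
noncomputable def uu (N s c d : ℤ) (τ : ℂ) : ℂ :=
  zeta N ^ (mu N (s * c) * s * d) * qq N τ ^ br N (s * c)

/-!
Modulo `N` one has `μ(x) x ≡ {x}`. Writing `t = μ(rc) r − μ(sc) s`, the hypothesis `{rc} = {sc}` gives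
`N ∣ t c`, while `ζ^{r* − s*} = 1` would give `N ∣ t d`. As `c` and `d` are coprime, `N ∣ t`; but
`t = ±r ± s` is nonzero and `|t| < N` because `0 < r, s ≤ N/2` and `r ≠ s`.
-/

theorem IsCoprime.dvd_of_dvd_mul_of_dvd_mul {R : Type*} [CommSemiring R] {a t c d : R}
    (hcd : IsCoprime c d) (hc : a ∣ t * c) (hd : a ∣ t * d) : a ∣ t := by
  obtain ⟨u, v, huv⟩ := hcd
  have ht : u * (t * c) + v * (t * d) = t := by
    rw [show u * (t * c) + v * (t * d) = t * (u * c + v * d) by ring, huv, mul_one]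
  exact ht ▸ dvd_add (hc.mul_left u) (hd.mul_left v)

lemma mu_eq_one_or_eq_neg_one (N x : ℤ) : mu N x = 1 ∨ mu N x = -1 := by
  unfold mu
  split_ifs <;> simp

lemma mu_mul_self_modEq_br {N : ℤ} (hN : 0 < N) (x : ℤ) : mu N x * x ≡ br N x [ZMOD N] := by
  have hlo : 0 ≤ x % N := Int.emod_nonneg x hN.ne'
  have hhi : x % N < N := Int.emod_lt_of_pos x hN
  unfold mu br
  split_ifs with hhalf
  · rw [min_eq_left (by omega), one_mul]
    exact (Int.mod_modEq x N).symm
  · rw [min_eq_right (by omega)]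
    refine (Int.modEq_iff_dvd.mpr ⟨-(x / N) - 1, ?_⟩).symm
    linear_combination Int.emod_def x N

lemma zeta_isPrimitiveRoot {N : ℤ} (hN : 0 < N) : IsPrimitiveRoot (zeta N) N.toNat := by
  have h := Complex.isPrimitiveRoot_exp N.toNat (by omega)
  rwa [← Int.cast_natCast, Int.toNat_of_nonneg hN.le] at h

lemma zeta_zpow_eq_one_iff {N : ℤ} (hN : 0 < N) (k : ℤ) : zeta N ^ k = 1 ↔ N ∣ k := by
  rw [(zeta_isPrimitiveRoot hN).zpow_eq_one_iff_dvd, Int.toNat_of_nonneg hN.le]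

lemma not_dvd_signed_sub {N r s ε η : ℤ} (hε : ε = 1 ∨ ε = -1) (hη : η = 1 ∨ η = -1)
    (hr0 : 0 < r) (hr : 2 * r ≤ N) (hs0 : 0 < s) (hs : 2 * s ≤ N) (hrs : r ≠ s) :
    ¬ N ∣ ε * r - η * s := by
  intro hdvd
  have hlt : |ε * r - η * s| < N := by
    rcases hε with rfl | rfl <;> rcases hη with rfl | rfl <;> rw [abs_lt] <;> constructor <;> omega
  have hne : ε * r - η * s ≠ 0 := by
    rcases hε with rfl | rfl <;> rcases hη with rfl | rfl <;> omega
  exact hne (Int.eq_zero_of_abs_lt_dvd hdvd hlt)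

/-- If {rc} = {sc} then ζ^{r*-s*} ≠ 1, where r* = μ(rc)rd, s* = μ(sc)sd. -/
theorem stmt0 (N r s c d : ℤ) (hN : 6 < N)
    (hr0 : 0 < r) (hr : 2 * r ≤ N) (hs0 : 0 < s) (hs : 2 * s ≤ N) (hrs : r ≠ s)
    (hcd : Int.gcd c d = 1)
    (h : br N (r * c) = br N (s * c)) :
    zeta N ^ (mu N (r * c) * r * d - mu N (s * c) * s * d) ≠ 1 := by
  have hN0 : 0 < N := by omega
  set t := mu N (r * c) * r - mu N (s * c) * s
  have hc : N ∣ t * c := by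
    have hrc := mu_mul_self_modEq_br hN0 (r * c)
    have hsc := mu_mul_self_modEq_br hN0 (s * c)
    rw [h] at hrc
    have hdvd := (hsc.trans hrc.symm).dvd
    rwa [show mu N (r * c) * (r * c) - mu N (s * c) * (s * c) = t * c by ring] at hdvd
  rw [Ne, zeta_zpow_eq_one_iff hN0, show mu N (r * c) * r * d - mu N (s * c) * s * d = t * d by ring]
  intro hd
  exact not_dvd_signed_sub (mu_eq_one_or_eq_neg_one N _) (mu_eq_one_or_eq_neg_one N _)
    hr0 hr hs0 hs hrs ((Int.isCoprime_iff_gcd_eq_one.mpr hcd).dvd_of_dvd_mul_of_dvd_mul hc hd)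
end

section
/- Let N > 6 and let c be an integer with {c} ≠ 0 and {2c} = {c}. Then N ≡ 0 (mod 3), {c} = {2c} = N/3, and μ(2c) = −μ(c). Moreover, for any integer k with gcd(k,3) = 1, one has {kc} = N/3 and μ(kc) = (k|3)·μ(c), where (k|3) denotes the Legendre symbol of k modulo 3. -/
open Complex

/-! Write r for the residue of c mod N. Since 2r ≡ ±r and r ≢ 0, the hypothesis {2c} = {c}
forces 3r ≡ 0, so N = 3m and c ≡ e m with e ∈ {1, 2}. Then kc ≡ (ke) m depends only on ke mod 3:
the class 1 gives {kc} = m, μ(kc) = 1 and the class 2 gives {kc} = m, μ(kc) = -1, that is,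
μ(kc) = (ke|3), and the multiplicativity of the Legendre symbol does the rest. -/

theorem mul_emod_three_mul {m : ℤ} (hm : 0 < m) (a : ℤ) : a * m % (3 * m) = a % 3 * m := by
  rw [mul_comm a, mul_comm 3, mul_comm (a % 3), Int.mul_emod_mul_of_pos _ _ hm]

theorem br_three_mul_of_modEq {m j x : ℤ} (hm : 0 < m) (hj : ¬ 3 ∣ j)
    (hx : x ≡ j * m [ZMOD 3 * m]) : br (3 * m) x = m := by
  have hxm : x % (3 * m) = j % 3 * m := hx.eq.trans (mul_emod_three_mul hm j)
  rcases (by omega : j % 3 = 1 ∨ j % 3 = 2) with h | h <;>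
    simp only [br, hxm, h] <;> omega

theorem mu_three_mul_of_modEq {m j x : ℤ} (hm : 0 < m) (hj : ¬ 3 ∣ j)
    (hx : x ≡ j * m [ZMOD 3 * m]) : mu (3 * m) x = legendreSym 3 j := by
  have hxm : x % (3 * m) = j % 3 * m := hx.eq.trans (mul_emod_three_mul hm j)
  rw [legendreSym.mod]
  rcases (by omega : j % 3 = 1 ∨ j % 3 = 2) with h | h <;>
    simp only [mu, hxm, h, Nat.cast_ofNat] <;> split_ifs <;> first | omega | decide

theorem exists_modEq_of_br_two_mul_eq_br {N c : ℤ} (hN : 0 < N) (hc : br N c ≠ 0)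
    (h2c : br N (2 * c) = br N c) : ∃ m e, N = 3 * m ∧ ¬ 3 ∣ e ∧ c ≡ e * m [ZMOD N] := by
  have hr0 := Int.emod_nonneg c hN.ne'
  have hrN := Int.emod_lt_of_pos c hN
  have h2r : 2 * c % N = 2 * (c % N) ∨ 2 * c % N = 2 * (c % N) - N := by
    rw [← ((Int.mod_modEq c N).mul_left 2).eq]
    rcases lt_or_ge (2 * (c % N)) N with h | h
    · exact .inl (Int.emod_eq_of_lt (by omega) h)
    · exact .inr (by rw [← Int.sub_emod_right, Int.emod_eq_of_lt (by omega) (by omega)])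
  simp only [br] at hc h2c
  have hN3 : N = 3 * (N / 3) := by omega
  rcases (by omega : c % N = N / 3 ∨ c % N = 2 * (N / 3)) with h | h
  · exact ⟨N / 3, 1, hN3, by decide, by rw [one_mul, ← h]; exact (Int.mod_modEq c N).symm⟩
  · exact ⟨N / 3, 2, hN3, by decide, by rw [← h]; exact (Int.mod_modEq c N).symm⟩

/-- if {c} ≠ 0 and {2c} = {c}, then 3 ∣ N, {c} = {2c} = N/3,
μ(2c) = −μ(c), and for every k with gcd(k,3) = 1, {kc} = N/3 and μ(kc) = (k|3)μ(c). -/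
theorem stmt15 (N c : ℤ) (hN : 6 < N) (hc : br N c ≠ 0) (h2c : br N (2 * c) = br N c) :
    3 ∣ N ∧ 3 * br N c = N ∧ 3 * br N (2 * c) = N ∧ mu N (2 * c) = -mu N c ∧
    ∀ k : ℤ, Int.gcd k 3 = 1 →
      3 * br N (k * c) = N ∧ mu N (k * c) = (@legendreSym 3 ⟨by norm_num⟩ k) * mu N c := by
  obtain ⟨m, e, rfl, he, hce⟩ := exists_modEq_of_br_two_mul_eq_br (by omega) hc h2c
  have hm : 0 < m := by omega
  have hmul : ∀ k : ℤ, ¬ 3 ∣ k →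
      3 * br (3 * m) (k * c) = 3 * m ∧ mu (3 * m) (k * c) = legendreSym 3 k * mu (3 * m) c := by
    intro k hk
    have hkc : k * c ≡ (k * e) * m [ZMOD 3 * m] := by
      simpa only [mul_assoc] using hce.mul_left k
    have hke : ¬ 3 ∣ k * e := Int.prime_three.dvd_mul.not.mpr (not_or.mpr ⟨hk, he⟩)
    rw [br_three_mul_of_modEq hm hke hkc, mu_three_mul_of_modEq hm hke hkc,
      mu_three_mul_of_modEq hm he hce, legendreSym.mul]
    exact ⟨rfl, rfl⟩
  obtain ⟨h2br, h2mu⟩ := hmul 2 (by decide)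
  have h2 : legendreSym 3 2 = -1 := by decide
  refine ⟨dvd_mul_right 3 m, by rw [br_three_mul_of_modEq hm he hce], h2br,
    by rw [h2mu, h2, neg_one_mul], fun k hk => hmul k fun h3 => ?_⟩
  exact Int.prime_three.not_isUnit
    ((Int.isCoprime_iff_gcd_eq_one.mpr hk).isUnit_of_dvd' h3 dvd_rfl)
end
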